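/- Let E be a T-invariant sublinear expectation on (Ω, H) and write p_d for the period of E^{(d)}. Then: (1) p_d divides d; (2) p_d = inf{l ∈ ℕ : E^{(l)} = E^{(d)}}; (3) if d divides l then p_d divides p_l. -/
import Mathlib


open MeasureTheory Filter Function Topology

structure IsHSpace {Ω : Type*} (T : Ω → Ω) (H : Set (Ω → ℝ)) : Prop where
  add_mem : ∀ f ∈ H, ∀ g ∈ H, f + g ∈ H
  smul_mem : ∀ (c : ℝ), ∀ f ∈ H, c • f ∈ H
  one_mem : (fun _ : Ω => (1 : ℝ)) ∈ H
  comp_mem : ∀ f ∈ H, f ∘ T ∈ H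
  abs_mem : ∀ f ∈ H, (fun ω => |f ω|) ∈ H

/-- `E` is a `T`-invariant sublinear expectation on `(Ω, H)`. -/
structure IsISE {Ω : Type*} (T : Ω → Ω) (H : Set (Ω → ℝ)) (E : (Ω → ℝ) → ℝ) : Prop where
  mono : ∀ f ∈ H, ∀ g ∈ H, (∀ ω, f ω ≤ g ω) → E f ≤ E g
  const : ∀ c : ℝ, E (fun _ => c) = c
  subadd : ∀ f ∈ H, ∀ g ∈ H, E (f + g) ≤ E f + E g
  homog : ∀ f ∈ H, ∀ c : ℝ, 0 ≤ c → E (c • f) = c * E f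
  inv : ∀ f ∈ H, E (f ∘ T) = E f

/-- The Birkhoff-type sum `∑_{k=0}^{n-1} f ∘ T^{kd}`. -/
def bsum {Ω : Type*} (T : Ω → Ω) (d : ℕ) (f : Ω → ℝ) (n : ℕ) : Ω → ℝ :=
  fun ω => ∑ k ∈ Finset.range n, f (T^[k * d] ω)

/-- `p` is a period of `E`: `E[f ∘ T^p − f] = 0` for all `f ∈ H`. -/
def IsPeriod {Ω : Type*} (T : Ω → Ω) (H : Set (Ω → ℝ)) (E : (Ω → ℝ) → ℝ) (p : ℕ) : Prop :=
  ∀ f ∈ H, E (fun ω => f (T^[p] ω) - f ω) = 0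

section Aux
variable {Ω : Type*} {T : Ω → Ω} {H : Set (Ω → ℝ)} {E : (Ω → ℝ) → ℝ}

lemma H_neg (hH : IsHSpace T H) {f} (hf : f ∈ H) : -f ∈ H := by
  have := hH.smul_mem (-1) f hf
  rwa [neg_one_smul] at this

lemma H_zero (hH : IsHSpace T H) : (fun _ : Ω => (0:ℝ)) ∈ H := by
  have := hH.smul_mem 0 _ hH.one_mem
  have h : (0:ℝ) • (fun _ : Ω => (1:ℝ)) = fun _ : Ω => (0:ℝ) := by
    funext ω; simp
  rwa [h] at this

lemma H_sub (hH : IsHSpace T H) {f g} (hf : f ∈ H) (hg : g ∈ H) : f - g ∈ H := by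
  have := hH.add_mem f hf (-g) (H_neg hH hg)
  rwa [← sub_eq_add_neg] at this

lemma H_iter (hH : IsHSpace T H) {f} (hf : f ∈ H) (k : ℕ) : f ∘ T^[k] ∈ H := by
  induction k with
  | zero => simpa using hf
  | succ k ih => exact hH.comp_mem _ ih

lemma H_sum (hH : IsHSpace T H) (g : ℕ → Ω → ℝ) (hg : ∀ k, g k ∈ H) (n : ℕ) :
    (fun ω => ∑ k ∈ Finset.range n, g k ω) ∈ H := by
  induction n with
  | zero => simpa using H_zero hH
  | succ n ih =>
    have := hH.add_mem _ ih _ (hg n)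
    have h : ((fun ω => ∑ k ∈ Finset.range n, g k ω) + g n)
        = fun ω => ∑ k ∈ Finset.range (n+1), g k ω := by
      funext ω; simp [Finset.sum_range_succ]
    rwa [h] at this

lemma H_bsum (hH : IsHSpace T H) {f} (hf : f ∈ H) (d n : ℕ) : bsum T d f n ∈ H :=
  H_sum hH (fun k => f ∘ T^[k * d]) (fun k => H_iter hH hf _) n

lemma E_zero (hE : IsISE T H E) : E (fun _ : Ω => (0:ℝ)) = 0 := hE.const 0

lemma E_iter (hE : IsISE T H E) (hH : IsHSpace T H) {f} (hf : f ∈ H) (k : ℕ) :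
    E (f ∘ T^[k]) = E f := by
  induction k with
  | zero => simp
  | succ k ih => rw [Function.iterate_succ, ← Function.comp_assoc, hE.inv _ (H_iter hH hf k), ih]

lemma E_add_neg (hE : IsISE T H E) (hH : IsHSpace T H) {f} (hf : f ∈ H) :
    0 ≤ E f + E (-f) := by
  have := hE.subadd f hf (-f) (H_neg hH hf)
  have h : f + (-f) = fun _ : Ω => (0:ℝ) := by funext ω; simp
  rw [h, E_zero hE] at this
  linarith

end Aux

section EdAux
variable {Ω : Type*} {T : Ω → Ω} {H : Set (Ω → ℝ)} {E : (Ω → ℝ) → ℝ}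
  {Ed : ℕ → (Ω → ℝ) → ℝ}
variable (hH : IsHSpace T H) (hE : IsISE T H E)
  (hEd : ∀ d, 0 < d → ∀ f ∈ H,
      Tendsto (fun n : ℕ => E (bsum T d f n) / n) atTop (𝓝 (Ed d f)))

include hH hE hEd

lemma Ed_subadd {d : ℕ} (hd : 0 < d) {f g} (hf : f ∈ H) (hg : g ∈ H) :
    Ed d (f + g) ≤ Ed d f + Ed d g := by
  have hfg : f + g ∈ H := hH.add_mem f hf g hg
  refine le_of_tendsto_of_tendsto' (hEd d hd _ hfg) ((hEd d hd f hf).add (hEd d hd g hg)) ?_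
  intro n
  have hb : bsum T d (f + g) n = bsum T d f n + bsum T d g n := by
    funext ω; simp [bsum, Finset.sum_add_distrib]
  rw [hb, ← add_div]
  exact div_le_div_of_nonneg_right
    (hE.subadd _ (H_bsum hH hf d n) _ (H_bsum hH hg d n)) (by positivity)

lemma Ed_smul {d : ℕ} (hd : 0 < d) {f} (hf : f ∈ H) {c : ℝ} (hc : 0 ≤ c) :
    Ed d (c • f) = c * Ed d f := by
  refine tendsto_nhds_unique (hEd d hd _ (hH.smul_mem c f hf)) ?_
  have hseq : ∀ n : ℕ, E (bsum T d (c • f) n) / n = c * (E (bsum T d f n) / n) := by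
    intro n
    have hb : bsum T d (c • f) n = c • bsum T d f n := by
      funext ω; simp [bsum, Finset.mul_sum]
    rw [hb, hE.homog _ (H_bsum hH hf d n) c hc, mul_div_assoc]
  simpa [hseq] using (hEd d hd f hf).const_mul c

lemma Ed_zero {d : ℕ} (hd : 0 < d) : Ed d (fun _ : Ω => (0:ℝ)) = 0 := by
  have := Ed_smul hH hE hEd hd hH.one_mem (le_refl (0:ℝ))
  have h : (0:ℝ) • (fun _ : Ω => (1:ℝ)) = fun _ : Ω => (0:ℝ) := by funext ω; simp
  rw [h] at this; rw [this, zero_mul]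

lemma Ed_add_neg (hd : 0 < d) {f : Ω → ℝ} (hf : f ∈ H) : 0 ≤ Ed d f + Ed d (-f) := by
  have h := Ed_subadd hH hE hEd hd hf (H_neg hH hf)
  have h0 : f + (-f) = fun _ : Ω => (0:ℝ) := by funext ω; simp
  rw [h0, Ed_zero hH hE hEd hd] at h
  linarith

lemma Ed_iter {d : ℕ} (hd : 0 < d) {f} (hf : f ∈ H) (j : ℕ) :
    Ed d (f ∘ T^[j]) = Ed d f := by
  refine tendsto_nhds_unique (hEd d hd _ (H_iter hH hf j)) ?_
  have hseq : ∀ n : ℕ, E (bsum T d (f ∘ T^[j]) n) = E (bsum T d f n) := by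
    intro n
    have hb : bsum T d (f ∘ T^[j]) n = (bsum T d f n) ∘ T^[j] := by
      funext ω
      simp only [bsum, Function.comp_apply]
      refine Finset.sum_congr rfl fun k _ => ?_
      rw [← Function.iterate_add_apply, ← Function.iterate_add_apply, Nat.add_comm]
    rw [hb, E_iter hE hH (H_bsum hH hf d n) j]
  simpa [hseq] using hEd d hd f hf

lemma Ed_period_self {d : ℕ} (hd : 0 < d) : IsPeriod T H (Ed d) d := by
  intro f hf
  have hgH : (fun ω => f (T^[d] ω) - f ω) ∈ H := H_sub hH (H_iter hH hf d) hf
  set C : ℝ := E f + E (-f) with hC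
  have hC0 : 0 ≤ C := E_add_neg hE hH hf
  have hbound : ∀ n : ℕ, |E (bsum T d (fun ω => f (T^[d] ω) - f ω) n)| ≤ C := by
    intro n
    have hb : bsum T d (fun ω => f (T^[d] ω) - f ω) n
        = f ∘ T^[n*d] + (-f) := by
      funext ω
      simp only [bsum]
      have : ∀ k : ℕ, f (T^[d] (T^[k*d] ω)) = f (T^[(k+1)*d] ω) := by
        intro k
        rw [← Function.iterate_add_apply]
        ring_nf
      calc ∑ k ∈ Finset.range n, (f (T^[d] (T^[k * d] ω)) - f (T^[k*d] ω))
          = ∑ k ∈ Finset.range n, (f (T^[(k+1) * d] ω) - f (T^[k*d] ω)) := by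
            refine Finset.sum_congr rfl fun k _ => by rw [this k]
        _ = f (T^[n*d] ω) - f (T^[0*d] ω) := Finset.sum_range_sub (fun k => f (T^[k*d] ω)) n
        _ = (f ∘ T^[n*d] + (-f)) ω := by simp [sub_eq_add_neg]
    rw [hb]
    rw [abs_le]
    constructor
    · have h1 : E (-(f ∘ T^[n*d] + (-f))) ≤ C := by
        have hneg : -(f ∘ T^[n*d] + (-f)) = (-f) ∘ T^[n*d] + f := by funext ω; simp; ring
        rw [hneg]
        have := hE.subadd _ (H_iter hH (H_neg hH hf) (n*d)) _ hf
        rw [E_iter hE hH (H_neg hH hf) (n*d)] at this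
        rw [hC]; linarith
      have h2 := E_add_neg hE hH (hH.add_mem _ (H_iter hH hf (n*d)) _ (H_neg hH hf))
      linarith
    · have := hE.subadd _ (H_iter hH hf (n*d)) _ (H_neg hH hf)
      rw [E_iter hE hH hf (n*d)] at this
      rw [hC]; linarith
  refine tendsto_nhds_unique (hEd d hd _ hgH) ?_
  refine squeeze_zero_norm' ?_ (tendsto_const_div_atTop_nhds_zero_nat C)
  · filter_upwards [eventually_ge_atTop 1] with n hn
    rw [Real.norm_eq_abs, abs_div, Nat.abs_cast]
    exact div_le_div_of_nonneg_right (hbound n) (by positivity)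

end EdAux
section EdAux2
variable {Ω : Type*} {T : Ω → Ω} {H : Set (Ω → ℝ)} {E : (Ω → ℝ) → ℝ}
  {Ed : ℕ → (Ω → ℝ) → ℝ}

lemma bsum_add (T : Ω → Ω) (d : ℕ) (f : Ω → ℝ) (a b : ℕ) :
    bsum T d f (a + b) = bsum T d f a + (bsum T d f b) ∘ T^[a*d] := by
  funext ω
  simp only [bsum, Pi.add_apply, Function.comp_apply, Finset.sum_range_add]
  congr 1
  refine Finset.sum_congr rfl fun k _ => ?_
  rw [← Function.iterate_add_apply]
  ring_nf

lemma bsum_one (T : Ω → Ω) (d : ℕ) (f : Ω → ℝ) : bsum T d f 1 = f := by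
  funext ω; simp [bsum]

lemma bsum_mul (T : Ω → Ω) (d m : ℕ) (f : Ω → ℝ) (n : ℕ) :
    bsum T d f (n * m) = bsum T (m*d) (bsum T d f m) n := by
  induction n with
  | zero => funext ω; simp [bsum]
  | succ n ih =>
    have h1 : (n+1) * m = n * m + m := by ring
    rw [h1, bsum_add, ih, show n*m*d = n*(m*d) by ring]
    conv_rhs => rw [bsum_add T (m*d) _ n 1, bsum_one]

variable (hH : IsHSpace T H) (hE : IsISE T H E)
  (hEd : ∀ d, 0 < d → ∀ f ∈ H,
      Tendsto (fun n : ℕ => E (bsum T d f n) / n) atTop (𝓝 (Ed d f)))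

include hH hE hEd

lemma Ed_key {d m : ℕ} (hd : 0 < d) (hm : 0 < m) {f} (hf : f ∈ H) :
    (m : ℝ) * Ed d f = Ed (m * d) (bsum T d f m) := by
  have hml : 0 < m * d := Nat.mul_pos hm hd
  have hgH : bsum T d f m ∈ H := H_bsum hH hf d m
  have h1 : Tendsto (fun n : ℕ => E (bsum T d f (n * m)) / ((n * m : ℕ) : ℝ))
      atTop (𝓝 (Ed d f)) := by
    exact (hEd d hd f hf).comp
      (tendsto_atTop_mono (fun n => Nat.le_mul_of_pos_right n hm) tendsto_id)
  have h2 : Tendsto (fun n : ℕ => E (bsum T (m*d) (bsum T d f m) n) / n / m)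
      atTop (𝓝 (Ed (m*d) (bsum T d f m) / m)) :=
    (hEd (m*d) hml _ hgH).div_const m
  have heq : (fun n : ℕ => E (bsum T d f (n * m)) / ((n * m : ℕ) : ℝ))
      = fun n : ℕ => E (bsum T (m*d) (bsum T d f m) n) / n / m := by
    funext n
    rw [bsum_mul, div_div, Nat.cast_mul]
  rw [heq] at h1
  have := tendsto_nhds_unique h1 h2
  rw [this]
  field_simp

lemma Ed_period_transfer {d m q : ℕ} (hd : 0 < d) (hm : 0 < m)
    (hq : IsPeriod T H (Ed (m*d)) q) : IsPeriod T H (Ed d) q := by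
  intro f hf
  have hFH : (fun ω => f (T^[q] ω) - f ω) ∈ H := H_sub hH (H_iter hH hf q) hf
  have hkey := Ed_key hH hE hEd hd hm hFH
  have hb : bsum T d (fun ω => f (T^[q] ω) - f ω) m
      = fun ω => (bsum T d f m) (T^[q] ω) - (bsum T d f m) ω := by
    funext ω
    simp only [bsum, Finset.sum_sub_distrib]
    congr 1
    refine Finset.sum_congr rfl fun k _ => ?_
    rw [← Function.iterate_add_apply, ← Function.iterate_add_apply, Nat.add_comm]
  rw [hb, hq _ (H_bsum hH hf d m)] at hkey
  have hm' : (m:ℝ) ≠ 0 := Nat.cast_ne_zero.mpr hm.ne'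
  rcases mul_eq_zero.mp hkey with h | h
  · exact absurd h hm'
  · exact h

end EdAux2
section PeriodAux
variable {Ω : Type*} {T : Ω → Ω} {H : Set (Ω → ℝ)} {E : (Ω → ℝ) → ℝ}
  {Ed : ℕ → (Ω → ℝ) → ℝ}
variable (hH : IsHSpace T H) (hE : IsISE T H E)
  (hEd : ∀ d, 0 < d → ∀ f ∈ H,
      Tendsto (fun n : ℕ => E (bsum T d f n) / n) atTop (𝓝 (Ed d f)))

include hH hE hEd

lemma period_of_le_zero {d a : ℕ} (hd : 0 < d)
    (h : ∀ f ∈ H, Ed d (fun ω => f (T^[a] ω) - f ω) ≤ 0) :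
    IsPeriod T H (Ed d) a := by
  intro f hf
  have hFH : (fun ω => f (T^[a] ω) - f ω) ∈ H := H_sub hH (H_iter hH hf a) hf
  have h1 := h f hf
  have h2 := h (-f) (H_neg hH hf)
  have hneg : (fun ω => (-f) (T^[a] ω) - (-f) ω) = -(fun ω => f (T^[a] ω) - f ω) := by
    funext ω; simp; ring
  rw [hneg] at h2
  have h3 := Ed_add_neg hH hE hEd hd hFH
  linarith

lemma period_zero {d : ℕ} (hd : 0 < d) : IsPeriod T H (Ed d) 0 := by
  intro f hf
  have h : (fun ω => f (T^[0] ω) - f ω) = fun _ : Ω => (0:ℝ) := by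
    funext ω; simp
  rw [h, Ed_zero hH hE hEd hd]

lemma period_add {d a b : ℕ} (hd : 0 < d)
    (ha : IsPeriod T H (Ed d) a) (hb : IsPeriod T H (Ed d) b) :
    IsPeriod T H (Ed d) (a + b) := by
  refine period_of_le_zero hH hE hEd hd (fun f hf => ?_)
  have hBH : (fun ω => f (T^[a] ω) - f ω) ∈ H := H_sub hH (H_iter hH hf a) hf
  have hsplit : (fun ω => f (T^[a+b] ω) - f ω)
      = ((fun ω => f (T^[a] ω) - f ω) ∘ T^[b]) + (fun ω => f (T^[b] ω) - f ω) := by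
    funext ω
    simp only [Pi.add_apply, Function.comp_apply]
    rw [← Function.iterate_add_apply]
    ring
  rw [hsplit]
  have hCH : (fun ω => f (T^[b] ω) - f ω) ∈ H := H_sub hH (H_iter hH hf b) hf
  have hle := Ed_subadd hH hE hEd hd (H_iter hH hBH b) hCH
  rw [Ed_iter hH hE hEd hd hBH b, ha f hf, hb f hf] at hle
  simpa using hle

lemma period_mul {d m : ℕ} (hd : 0 < d) (hm : IsPeriod T H (Ed d) m) (k : ℕ) :
    IsPeriod T H (Ed d) (k * m) := by
  induction k with
  | zero => simpa using period_zero hH hE hEd hd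
  | succ k ih =>
    have := period_add hH hE hEd hd ih hm
    simpa [Nat.succ_mul] using this

lemma period_cancel {d a b : ℕ} (hd : 0 < d)
    (hab : IsPeriod T H (Ed d) (a + b)) (hb : IsPeriod T H (Ed d) b) :
    IsPeriod T H (Ed d) a := by
  refine period_of_le_zero hH hE hEd hd (fun f hf => ?_)
  have hGH : (fun ω => f (T^[a] ω) - f ω) ∈ H := H_sub hH (H_iter hH hf a) hf
  have h1 : Ed d (fun ω => f (T^[a] ω) - f ω)
      = Ed d ((fun ω => f (T^[a] ω) - f ω) ∘ T^[b]) :=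
    (Ed_iter hH hE hEd hd hGH b).symm
  have hsplit : (fun ω => f (T^[a] ω) - f ω) ∘ T^[b]
      = (fun ω => f (T^[a+b] ω) - f ω) + (fun ω => (-f) (T^[b] ω) - (-f) ω) := by
    funext ω
    simp only [Pi.add_apply, Function.comp_apply, Pi.neg_apply]
    rw [← Function.iterate_add_apply]
    ring
  rw [h1, hsplit]
  have hABH : (fun ω => f (T^[a+b] ω) - f ω) ∈ H := H_sub hH (H_iter hH hf (a+b)) hf
  have hNH : (fun ω => (-f) (T^[b] ω) - (-f) ω) ∈ H :=
    H_sub hH (H_iter hH (H_neg hH hf) b) (H_neg hH hf)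
  have hle := Ed_subadd hH hE hEd hd hABH hNH
  rw [hab f hf, hb (-f) (H_neg hH hf)] at hle
  simpa using hle

lemma period_dvd {d m : ℕ} (hd : 0 < d) (hm0 : 0 < m)
    (hm : IsPeriod T H (Ed d) m)
    (hmin : ∀ q, 0 < q → IsPeriod T H (Ed d) q → m ≤ q)
    {a : ℕ} (ha : IsPeriod T H (Ed d) a) : m ∣ a := by
  have hmod : IsPeriod T H (Ed d) (a % m) := by
    have hmul : IsPeriod T H (Ed d) ((a / m) * m) := period_mul hH hE hEd hd hm (a / m)
    have hsum : a % m + a / m * m = a := Nat.mod_add_div' a m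
    exact period_cancel hH hE hEd hd (by rwa [hsum]) hmul
  by_contra hndvd
  have hpos : 0 < a % m := Nat.pos_of_ne_zero (fun h0 => hndvd (Nat.dvd_of_mod_eq_zero h0))
  have := hmin _ hpos hmod
  exact absurd (Nat.mod_lt a hm0) (not_lt.mpr this)

end PeriodAux
section FinalAux
variable {Ω : Type*} {T : Ω → Ω} {H : Set (Ω → ℝ)} {E : (Ω → ℝ) → ℝ}
  {Ed : ℕ → (Ω → ℝ) → ℝ}
variable (hH : IsHSpace T H) (hE : IsISE T H E)
  (hEd : ∀ d, 0 < d → ∀ f ∈ H,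
      Tendsto (fun n : ℕ => E (bsum T d f n) / n) atTop (𝓝 (Ed d f)))

include hH hE hEd

lemma Ed_sum_le {d : ℕ} (hd : 0 < d) (g : ℕ → Ω → ℝ) (hg : ∀ k, g k ∈ H) (s : ℕ) :
    Ed d (fun ω => ∑ k ∈ Finset.range s, g k ω) ≤ ∑ k ∈ Finset.range s, Ed d (g k) := by
  induction s with
  | zero =>
    simp only [Finset.sum_range_zero]
    exact le_of_eq (Ed_zero hH hE hEd hd)
  | succ s ih =>
    have hsplit : (fun ω => ∑ k ∈ Finset.range (s+1), g k ω)
        = (fun ω => ∑ k ∈ Finset.range s, g k ω) + g s := by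
      funext ω; simp [Finset.sum_range_succ]
    rw [hsplit, Finset.sum_range_succ]
    have := Ed_subadd hH hE hEd hd (H_sum hH g hg s) (hg s)
    linarith

lemma Ed_bsum_of_period {d m : ℕ} (hd : 0 < d) (hmp : IsPeriod T H (Ed d) m)
    {f} (hf : f ∈ H) (s : ℕ) :
    Ed d (bsum T m f s) = (s : ℝ) * Ed d f := by
  have hDj : ∀ j : ℕ, (fun ω => f (T^[j*m] ω) - f ω) ∈ H :=
    fun j => H_sub hH (H_iter hH hf (j*m)) hf
  have hDj' : ∀ j : ℕ, (fun ω => (-f) (T^[j*m] ω) - (-f) ω) ∈ H :=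
    fun j => H_sub hH (H_iter hH (H_neg hH hf) (j*m)) (H_neg hH hf)
  have hper : ∀ j : ℕ, Ed d (fun ω => f (T^[j*m] ω) - f ω) = 0 :=
    fun j => period_mul hH hE hEd hd hmp j f hf
  have hper' : ∀ j : ℕ, Ed d (fun ω => (-f) (T^[j*m] ω) - (-f) ω) = 0 :=
    fun j => period_mul hH hE hEd hd hmp j (-f) (H_neg hH hf)
  have hDH : (fun ω => ∑ j ∈ Finset.range s, (f (T^[j*m] ω) - f ω)) ∈ H :=
    H_sum hH _ hDj s
  have hDH' : (fun ω => ∑ j ∈ Finset.range s, ((-f) (T^[j*m] ω) - (-f) ω)) ∈ H :=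
    H_sum hH _ hDj' s
  have hED : Ed d (fun ω => ∑ j ∈ Finset.range s, (f (T^[j*m] ω) - f ω)) ≤ 0 := by
    have h := Ed_sum_le hH hE hEd hd _ hDj s
    have h2 : ∑ k ∈ Finset.range s, Ed d (fun ω => f (T^[k*m] ω) - f ω) = 0 :=
      Finset.sum_eq_zero fun k _ => hper k
    linarith
  have hED' : Ed d (fun ω => ∑ j ∈ Finset.range s, ((-f) (T^[j*m] ω) - (-f) ω)) ≤ 0 := by
    have h := Ed_sum_le hH hE hEd hd _ hDj' s
    have h2 : ∑ k ∈ Finset.range s, Ed d (fun ω => (-f) (T^[k*m] ω) - (-f) ω) = 0 :=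
      Finset.sum_eq_zero fun k _ => hper' k
    linarith
  have hsf : (s:ℝ) • f ∈ H := hH.smul_mem _ f hf
  have hupper : Ed d (bsum T m f s) ≤ (s:ℝ) * Ed d f := by
    have hsplit : bsum T m f s
        = (s:ℝ) • f + (fun ω => ∑ j ∈ Finset.range s, (f (T^[j*m] ω) - f ω)) := by
      funext ω
      simp only [bsum, Pi.add_apply, Pi.neg_apply, Pi.smul_apply, smul_eq_mul, Finset.sum_sub_distrib,
        Finset.sum_add_distrib, Finset.sum_neg_distrib, Finset.sum_const,
        Finset.card_range, nsmul_eq_mul]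
      ring
    rw [hsplit]
    have := Ed_subadd hH hE hEd hd hsf hDH
    rw [Ed_smul hH hE hEd hd hf (by positivity : (0:ℝ) ≤ (s:ℝ))] at this
    linarith
  have hlower : (s:ℝ) * Ed d f ≤ Ed d (bsum T m f s) := by
    have hsplit : (s:ℝ) • f
        = bsum T m f s + (fun ω => ∑ j ∈ Finset.range s, ((-f) (T^[j*m] ω) - (-f) ω)) := by
      funext ω
      simp only [bsum, Pi.add_apply, Pi.neg_apply, Pi.smul_apply, smul_eq_mul, Finset.sum_sub_distrib,
        Finset.sum_add_distrib, Finset.sum_neg_distrib, Finset.sum_const,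
        Finset.card_range, nsmul_eq_mul]
      ring
    have := Ed_subadd hH hE hEd hd (H_bsum hH hf m s) hDH'
    rw [← hsplit, Ed_smul hH hE hEd hd hf (by positivity : (0:ℝ) ≤ (s:ℝ))] at this
    linarith
  linarith

end FinalAux

theorem stmt10 {Ω : Type*} (T : Ω → Ω) (H : Set (Ω → ℝ))
    (hH : IsHSpace T H) (E : (Ω → ℝ) → ℝ) (hE : IsISE T H E)
    (Ed : ℕ → (Ω → ℝ) → ℝ)
    (hEd : ∀ d, 0 < d → ∀ f ∈ H,
      Tendsto (fun n : ℕ => E (bsum T d f n) / n) atTop (𝓝 (Ed d f)))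
    (p : ℕ → ℕ)
    (hp : ∀ d, 0 < d → 0 < p d ∧ IsPeriod T H (Ed d) (p d) ∧
      ∀ q, 0 < q → IsPeriod T H (Ed d) q → p d ≤ q) :
    (∀ d, 0 < d → p d ∣ d) ∧
      (∀ d, 0 < d → p d = sInf {l | 0 < l ∧ ∀ f ∈ H, Ed l f = Ed d f}) ∧
      (∀ d l, 0 < d → 0 < l → d ∣ l → p d ∣ p l) := by
  have part1 : ∀ d, 0 < d → p d ∣ d := by
    intro d hd
    obtain ⟨hpd, hper, hmin⟩ := hp d hd
    exact period_dvd hH hE hEd hd hpd hper hmin (Ed_period_self hH hE hEd hd)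
  have part2mem : ∀ d, 0 < d → ∀ f ∈ H, Ed (p d) f = Ed d f := by
    intro d hd f hf
    obtain ⟨hpd, hper, hmin⟩ := hp d hd
    obtain ⟨s, hs⟩ := part1 d hd
    have hs0 : 0 < s := by
      rcases Nat.eq_zero_or_pos s with h | h
      · subst h; simp at hs; omega
      · exact h
    have hk := Ed_key hH hE hEd hpd hs0 hf
    have hsd : s * p d = d := by rw [mul_comm]; exact hs.symm
    rw [hsd] at hk
    rw [Ed_bsum_of_period hH hE hEd hd hper hf s] at hk
    have hsne : (s:ℝ) ≠ 0 := Nat.cast_ne_zero.mpr hs0.ne'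
    exact mul_left_cancel₀ hsne hk
  refine ⟨part1, ?_, ?_⟩
  · intro d hd
    obtain ⟨hpd, hper, hmin⟩ := hp d hd
    have hmem : p d ∈ {l | 0 < l ∧ ∀ f ∈ H, Ed l f = Ed d f} := ⟨hpd, part2mem d hd⟩
    apply le_antisymm
    swap
    · exact Nat.sInf_le hmem
    · refine le_csInf ⟨p d, hmem⟩ ?_
      rintro l ⟨hl, hEq⟩
      have hlper : IsPeriod T H (Ed l) l := Ed_period_self hH hE hEd hl
      have hdl : IsPeriod T H (Ed d) l := by
        intro f hf
        have hFH : (fun ω => f (T^[l] ω) - f ω) ∈ H := H_sub hH (H_iter hH hf l) hf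
        rw [← hEq _ hFH]
        exact hlper f hf
      exact hmin l hl hdl
  · intro d l hd hl hdl
    obtain ⟨m, hm⟩ := hdl
    have hm0 : 0 < m := by
      rcases Nat.eq_zero_or_pos m with h | h
      · subst h; simp at hm; omega
      · exact h
    obtain ⟨hpd, hper, hmin⟩ := hp d hd
    obtain ⟨hpl, hperl, _⟩ := hp l hl
    have hml : m * d = l := by rw [hm]; ring
    have hperl' : IsPeriod T H (Ed (m*d)) (p l) := by rw [hml]; exact hperl
    have htrans : IsPeriod T H (Ed d) (p l) :=
      Ed_period_transfer hH hE hEd hd hm0 hperl'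
    exact period_dvd hH hE hEd hd hpd hper hmin htrans
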